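/- arXiv:2405.07557 — 2 statements merged into one kernel-verified Lean document; each statement's English description precedes it below -/
import Mathlib

section
/- Let P be a finite set of n players and T ⊆ P a set of byzantine players with |T| = t0 and 1 ≤ t0 ≤ n. If the agreement threshold τ satisfies τ ≤ ⌊(n + t0)/2⌋, then there exist disjoint sets A, B ⊆ P \ T with A ∪ B = P \ T such that |A| + t0 ≥ τ and |B| + t0 ≥ τ (so each partition together with the byzantine players reaches the agreement threshold, enabling agreement on two conflicting values). -/
theorem Finset.exists_disjoint_union_eq_card_half_le {α : Type*} [DecidableEq α]
    (s : Finset α) :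
    ∃ A B : Finset α, Disjoint A B ∧ A ∪ B = s ∧ s.card / 2 ≤ A.card ∧ s.card / 2 ≤ B.card := by
  obtain ⟨A, hAs, hA⟩ := s.exists_subset_card_eq (Nat.div_le_self s.card 2)
  refine ⟨A, s \ A, disjoint_sdiff, union_sdiff_of_subset hAs, hA.ge, ?_⟩
  rw [card_sdiff_of_subset hAs, hA]
  omega

theorem fork_of_low_threshold_general {α : Type*} [DecidableEq α]
    (P T : Finset α) (n t0 τ : ℕ)
    (hTP : T ⊆ P) (hn : P.card = n) (ht : T.card = t0)
    (htn : t0 ≤ n)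
    (hτ : τ ≤ (n + t0) / 2) :
    ∃ A B : Finset α, A ⊆ P \ T ∧ B ⊆ P \ T ∧ Disjoint A B ∧
      A ∪ B = P \ T ∧ A.card + t0 ≥ τ ∧ B.card + t0 ≥ τ := by
  have hcard : (P \ T).card = n - t0 := by
    rw [Finset.card_sdiff_of_subset hTP, hn, ht]
  obtain ⟨A, B, hdisj, hunion, hA, hB⟩ := (P \ T).exists_disjoint_union_eq_card_half_le
  have hhalf : (n + t0) / 2 = (n - t0) / 2 + t0 := by omega
  refine ⟨A, B, hunion ▸ Finset.subset_union_left, hunion ▸ Finset.subset_union_right,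
    hdisj, hunion, ?_, ?_⟩ <;> omega

/-- Disagreement half of Claim 1 (byz-lim): if the agreement threshold `τ` is at
most `⌊(n + t0)/2⌋`, the non-byzantine players `P \ T` can be split into two
disjoint sets `A` and `B`, each of which together with the `t0` byzantine
players reaches the threshold `τ`. -/
theorem fork_of_low_threshold {α : Type*} [DecidableEq α]
    (P T : Finset α) (n t0 τ : ℕ)
    (hTP : T ⊆ P) (hn : P.card = n) (ht : T.card = t0)
    (ht1 : 1 ≤ t0) (htn : t0 ≤ n)
    (hτ : τ ≤ (n + t0) / 2) :
    ∃ A B : Finset α, A ⊆ P \ T ∧ B ⊆ P \ T ∧ Disjoint A B ∧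
      A ∪ B = P \ T ∧ A.card + t0 ≥ τ ∧ B.card + t0 ≥ τ :=
  fork_of_low_threshold_general P T n t0 τ hTP hn ht htn hτ
end

section
/- Let t0 be a natural number, n = 3·t0 + 1, and let P be a finite set of n players with disjoint subsets K, T ⊆ P of sizes k and t such that k + t ≥ t0 + 1. Then the set H = P \ (K ∪ T) can be partitioned into disjoint sets A and B with A ∪ B = H such that |A| + k + t ≥ n − t0 and |B| + k + t ≥ n − t0. -/
/-- Counting core of Theorem 3 (insecure Nash equilibrium in baiting-based
consensus): with `n = 3·t0 + 1` players, a coalition of `k` rational and `t`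
byzantine players with `k + t ≥ t0 + 1` can split the honest players
`H = P \ (K ∪ T)` into disjoint sets `A`, `B` with `A ∪ B = H` such that each
half together with the coalition reaches the quorum `n - t0`. -/
theorem fork_partition_exists {α : Type*} [DecidableEq α]
    (t0 n k t : ℕ) (P K T : Finset α)
    (hn : n = 3 * t0 + 1) (hP : P.card = n)
    (hKP : K ⊆ P) (hTP : T ⊆ P) (hKT : Disjoint K T)
    (hk : K.card = k) (ht : T.card = t) (hkt : k + t ≥ t0 + 1) :
    ∃ A B : Finset α, Disjoint A B ∧ A ∪ B = P \ (K ∪ T) ∧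
      A.card + k + t ≥ n - t0 ∧ B.card + k + t ≥ n - t0 := by
  set H := P \ (K ∪ T) with hH
  have hKTP : K ∪ T ⊆ P := Finset.union_subset hKP hTP
  have hKTcard : (K ∪ T).card = k + t := by
    rw [Finset.card_union_of_disjoint hKT, hk, ht]
  have hHcard : H.card = n - (k + t) := by
    rw [hH, Finset.card_sdiff_of_subset hKTP, hKTcard, hP]
  have hktn : k + t ≤ n := by
    rw [← hKTcard, ← hP]; exact Finset.card_le_card hKTP
  have hle : 2 * t0 + 1 - (k + t) ≤ H.card := by omega
  obtain ⟨A, hAH, hAcard⟩ := Finset.exists_subset_card_eq hle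
  refine ⟨A, H \ A, Finset.disjoint_sdiff, Finset.union_sdiff_of_subset hAH, ?_, ?_⟩
  · omega
  · have : (H \ A).card = H.card - A.card := Finset.card_sdiff_of_subset hAH
    omega
end
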